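/- For every δ ∈ ℝ, the profile M₀ is a steady-state solution of the moving-frame Landau–Lifschitz equation: for every x ∈ ℝ, −M₀(x) ∧ h(M₀)(x) − M₀(x) ∧ (M₀(x) ∧ h(M₀)(x)) − δ(M₀'(x) + (M₀)₁(x) M₀(x) − e₁) = 0, where h(M₀) = M₀'' − (M₀)₂e₂ − (M₀)₃e₃. -/

import Mathlib

open Matrix

noncomputable section

def e1 : Fin 3 → ℝ := ![1, 0, 0]
def e2 : Fin 3 → ℝ := ![0, 1, 0]
def e3 : Fin 3 → ℝ := ![0, 0, 1]

def M0 (x : ℝ) : Fin 3 → ℝ := ![Real.tanh x, 0, 1 / Real.cosh x]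

def hEff0 (v : ℝ → Fin 3 → ℝ) (x : ℝ) : Fin 3 → ℝ :=
  deriv (deriv v) x - v x 1 • e2 - v x 2 • e3

def M0d (x : ℝ) : Fin 3 → ℝ :=
  ![1 / Real.cosh x ^ 2, 0, -(Real.sinh x / Real.cosh x ^ 2)]

def M0dd (x : ℝ) : Fin 3 → ℝ :=
  ![-(2 * Real.sinh x / Real.cosh x ^ 3), 0,
    -((Real.cosh x ^ 2 - 2 * Real.sinh x ^ 2) / Real.cosh x ^ 3)]

lemma cosh_ne (x : ℝ) : Real.cosh x ≠ 0 := (Real.cosh_pos x).ne'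

lemma hasDerivAt_M0 (x : ℝ) : HasDerivAt M0 (M0d x) x := by
  rw [hasDerivAt_pi]
  intro i
  fin_cases i
  · have : HasDerivAt (fun x => Real.sinh x / Real.cosh x)
        ((Real.cosh x * Real.cosh x - Real.sinh x * Real.sinh x) / Real.cosh x ^ 2) x :=
      (Real.hasDerivAt_sinh x).div (Real.hasDerivAt_cosh x) (cosh_ne x)
    simp only [M0, M0d, Fin.zero_eta, Fin.isValue, Matrix.cons_val_zero]
    convert this using 2 with y
    · rfl
    · rfl
    · simp [Real.tanh_eq_sinh_div_cosh]
    · have h := Real.cosh_sq_sub_sinh_sq x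
      nlinarith [h]
  · simpa [M0, M0d] using hasDerivAt_const x (0:ℝ)
  · have : HasDerivAt (fun x => 1 / Real.cosh x)
        ((0 * Real.cosh x - 1 * Real.sinh x) / Real.cosh x ^ 2) x :=
      (hasDerivAt_const x 1).div (Real.hasDerivAt_cosh x) (cosh_ne x)
    simp only [M0, M0d, Fin.reduceFinMk, Fin.isValue, Matrix.cons_val_two, Matrix.tail_cons, Matrix.cons_val_one, Matrix.head_cons]
    convert this using 1
    · rfl
    · rfl
    simp [M0d]
    ring

lemma deriv_M0 : deriv M0 = M0d := funext fun x => (hasDerivAt_M0 x).deriv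

lemma hasDerivAt_M0d (x : ℝ) : HasDerivAt M0d (M0dd x) x := by
  rw [hasDerivAt_pi]
  intro i
  fin_cases i
  · have : HasDerivAt (fun x => 1 / Real.cosh x ^ 2)
        ((0 * Real.cosh x ^ 2 - 1 * (2 * Real.cosh x ^ 1 * Real.sinh x)) / (Real.cosh x ^ 2) ^ 2) x :=
      (hasDerivAt_const x 1).div ((Real.hasDerivAt_cosh x).pow 2) (pow_ne_zero 2 (cosh_ne x))
    simp only [M0d, M0dd, Fin.zero_eta, Fin.isValue, Matrix.cons_val_zero]
    convert this using 1
    · rfl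
    · rfl
    have := cosh_ne x
    field_simp
    ring
  · simpa [M0d, M0dd] using hasDerivAt_const x (0:ℝ)
  · have : HasDerivAt (fun x => -(Real.sinh x / Real.cosh x ^ 2))
        (-((Real.cosh x * Real.cosh x ^ 2 - Real.sinh x * (2 * Real.cosh x ^ 1 * Real.sinh x)) / (Real.cosh x ^ 2) ^ 2)) x :=
      ((Real.hasDerivAt_sinh x).div ((Real.hasDerivAt_cosh x).pow 2) (pow_ne_zero 2 (cosh_ne x))).neg
    simp only [M0d, M0dd, Fin.reduceFinMk, Fin.isValue, Matrix.cons_val_two, Matrix.tail_cons, Matrix.cons_val_one, Matrix.head_cons]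
    convert this using 1
    · rfl
    · rfl
    have := cosh_ne x
    simp [M0dd]
    field_simp

/-- For every `δ`, the wall profile `M₀` is a steady-state solution of the moving-frame
Landau–Lifschitz equation
`∂ₜv = -v ∧ h(v) - v ∧ (v ∧ h(v)) - δ(∂ₓv + v₁v - e₁)`. -/
theorem M0_steady_state_moving_frame (δ : ℝ) :
    ∀ x : ℝ,
      -(M0 x ⨯₃ hEff0 M0 x) - M0 x ⨯₃ (M0 x ⨯₃ hEff0 M0 x)
        - δ • (deriv M0 x + M0 x 0 • M0 x - e1) = 0 := by
  intro x
  have h2 : deriv (deriv M0) x = M0dd x := by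
    rw [deriv_M0]; exact (hasDerivAt_M0d x).deriv
  have hc := cosh_ne x
  have hsq := Real.cosh_sq_sub_sinh_sq x
  have hE : hEff0 M0 x = (-(2 / Real.cosh x ^ 2)) • M0 x := by
    unfold hEff0
    rw [h2]
    funext i
    fin_cases i
    · simp [M0, M0dd, e2, e3, Real.tanh_eq_sinh_div_cosh]
      field_simp
    · simp [M0, M0dd, e2, e3]
    · simp [M0, M0dd, e2, e3]
      field_simp
      ring_nf
      linear_combination (-2) * hsq
  have hcross : M0 x ⨯₃ hEff0 M0 x = 0 := by
    rw [hE, LinearMap.map_smul, cross_self, smul_zero]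
  rw [hcross, deriv_M0]
  funext i
  fin_cases i
  · simp [M0, M0d, e1, Real.tanh_eq_sinh_div_cosh, cross_apply]
    field_simp
    ring_nf
    exact Or.inr (by linear_combination (-1) * hsq)
  · simp [M0, M0d, e1, Real.tanh_eq_sinh_div_cosh, cross_apply]
  · simp [M0, M0d, e1, Real.tanh_eq_sinh_div_cosh, cross_apply]
    field_simp
    ring_nf
    exact Or.inr trivial

end
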